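/- arXiv:2003.13004 — 2 statements merged into one kernel-verified Lean document; each statement's English description precedes it below -/
import Mathlib

section
/- The matrix S = (e^{-ℓ_{uv}})_{u,v=1}^N, where ℓ_{uv} is the path-length distance between leaves u and v in a phylogenetic tree with all pairwise leaf distances strictly positive (for u ≠ v) and ℓ_{uu} = 0, is symmetric positive definite. -/
/-!
Root the tree at `r` and write `K = (e^{-d(a,b)})` on all vertices. If `p` is a deepest vertex
in the support of `y` and `nb` its parent, every other vertex of the support is reached from `p`
through `nb`, so on that support row `p` of `K` is `t = e^{-w(nb,p)}` times row `nb`. Writing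
`y = y' + y_p e_p`, `c = (K y')_nb` and `z = y' - c e_nb`, completing the square gives
`yᵀKy = zᵀKz + (y_p + t c)² + (1 - t²) c²`, and `z` has smaller total depth of support than `y`;
induction yields `yᵀKy ≥ 0`. Edges of weight zero make `K` singular, so `yᵀKy = 0` only forces
the sum of `y` over every class of vertices at mutual distance zero to vanish; for leaves at
pairwise positive distance these classes are singletons.
-/

open Finset Matrix

namespace Matrix

variable {n R : Type*} [Fintype n] [DecidableEq n] [CommRing R]

theorem add_single_dotProduct_mulVec_add_single {A : Matrix n n R} (hA : A.IsSymm) (y : n → R)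
    (p : n) (a : R) :
    (y + Pi.single p a) ⬝ᵥ A *ᵥ (y + Pi.single p a)
      = y ⬝ᵥ A *ᵥ y + 2 * a * (A *ᵥ y) p + a ^ 2 * A p p := by
  have hsymm : y ⬝ᵥ A *ᵥ Pi.single p a = (A *ᵥ y) p * a := by
    rw [dotProduct_mulVec, dotProduct_single, ← vecMul_transpose, hA.eq]
  have hpp : (A *ᵥ Pi.single p a) p = A p p * a := by simp [mulVec, dotProduct_single]
  simp only [mulVec_add, dotProduct_add, add_dotProduct, hsymm, single_dotProduct, hpp]
  ring

theorem add_single_dotProduct_mulVec_add_single_eq_of_mulVec_apply {A : Matrix n n R}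
    (hA : A.IsSymm) {p q : n} (hp : A p p = 1) (hq : A q q = 1) {y : n → R} {t : R}
    (hrow : (A *ᵥ y) p = t * (A *ᵥ y) q) (a : R) :
    (y + Pi.single p a) ⬝ᵥ A *ᵥ (y + Pi.single p a)
      = (y + Pi.single q (-(A *ᵥ y) q)) ⬝ᵥ A *ᵥ (y + Pi.single q (-(A *ᵥ y) q))
        + (a + t * (A *ᵥ y) q) ^ 2 + (1 - t ^ 2) * (A *ᵥ y) q ^ 2 := by
  rw [add_single_dotProduct_mulVec_add_single hA, add_single_dotProduct_mulVec_add_single hA,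
    hrow, hp, hq]
  ring

theorem mulVec_sum_single_apply {ι : Type*} [Fintype ι] (A : Matrix n n R) (e : ι → n)
    (x : ι → R) (a : n) :
    (A *ᵥ ∑ u, Pi.single (e u) (x u)) a = ∑ u, A a (e u) * x u := by
  simp [mulVec_sum, Finset.sum_apply, mul_comm]

theorem dotProduct_submatrix_mulVec {ι : Type*} [Fintype ι] (A : Matrix n n R) (e : ι → n)
    (x : ι → R) :
    x ⬝ᵥ A.submatrix e e *ᵥ x
      = (∑ u, Pi.single (e u) (x u)) ⬝ᵥ A *ᵥ ∑ u, Pi.single (e u) (x u) := by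
  rw [sum_dotProduct]
  simp only [single_dotProduct, mulVec_sum_single_apply]
  rfl

end Matrix

namespace SimpleGraph.IsTree

variable {V : Type*} {G : SimpleGraph V} (hG : G.IsTree)

noncomputable def path (a b : V) : G.Walk a b :=
  (hG.existsUnique_path a b).choose

theorem isPath_path (a b : V) : (hG.path a b).IsPath :=
  (hG.existsUnique_path a b).choose_spec.1

variable {hG} in
theorem eq_path {a b : V} {W : G.Walk a b} (hW : W.IsPath) : W = hG.path a b :=
  (hG.existsUnique_path a b).choose_spec.2 W hW

theorem path_self (a : V) : hG.path a a = .nil :=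
  (eq_path .nil).symm

theorem path_of_adj {a b : V} (h : G.Adj a b) : hG.path a b = .cons h .nil :=
  (eq_path (by simp [h.ne])).symm

theorem path_eq_append [DecidableEq V] {a b c : V} (hb : b ∈ (hG.path a c).support) :
    hG.path a c = (hG.path a b).append (hG.path b c) := by
  have hc := hG.isPath_path a c
  rw [← eq_path (hc.takeUntil hb), ← eq_path (hc.dropUntil hb), Walk.take_spec]

noncomputable def depth (r v : V) : ℕ := (hG.path r v).length

theorem depth_eq_zero_iff {r v : V} : hG.depth r v = 0 ↔ v = r := by
  refine ⟨fun h => (Walk.eq_of_length_eq_zero h).symm, ?_⟩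
  rintro rfl
  simp [depth, path_self]

def IsParent (r m p : V) : Prop :=
  ∃ h : G.Adj m p, hG.path r p = (hG.path r m).concat h

theorem isParent_or_isParent_of_adj (r : V) {m p : V} (h : G.Adj m p) :
    hG.IsParent r m p ∨ hG.IsParent r p m := by
  classical
  by_cases hp : p ∈ (hG.path r m).support
  · refine .inr ⟨h.symm, ?_⟩
    rw [hG.path_eq_append hp, hG.path_of_adj h.symm, Walk.concat_eq_append]
  · refine .inl ⟨h, (eq_path ?_).symm⟩
    rw [← Walk.isPath_reverse_iff, Walk.reverse_concat]
    exact (hG.isPath_path r m).reverse.cons (by simpa using hp)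

variable {hG} in
theorem IsParent.eq {r m m' p : V} (h : hG.IsParent r m p) (h' : hG.IsParent r m' p) :
    m = m' := by
  obtain ⟨hm, hpm⟩ := h
  obtain ⟨hm', hpm'⟩ := h'
  exact (Walk.concat_inj (hpm.symm.trans hpm')).1

variable {hG} in
theorem IsParent.depth_eq {r m p : V} (h : hG.IsParent r m p) :
    hG.depth r p = hG.depth r m + 1 := by
  obtain ⟨hm, hpm⟩ := h
  simp [depth, hpm]

theorem exists_isParent {r p : V} (hp : p ≠ r) : ∃ m, hG.IsParent r m p := by
  have hnil : ¬ (hG.path r p).Nil := Walk.not_nil_of_ne hp.symm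
  have hadj := (hG.path r p).adj_penultimate hnil
  refine ⟨_, hadj, ?_⟩
  rw [← eq_path (hG.isPath_path r p).dropLast, Walk.concat_dropLast]

/-- Along a path in a tree, once a step goes down from the root, every later step does. -/
theorem depth_lt_of_isPath_cons {r p m q : V} (h : G.Adj p m) (W : G.Walk m q)
    (hW : (Walk.cons h W).IsPath) (hpm : hG.IsParent r p m) : hG.depth r p < hG.depth r q := by
  induction W generalizing p with
  | nil => simp [hpm.depth_eq]
  | @cons m m' q h' W ih =>
    rcases hG.isParent_or_isParent_of_adj r h' with hmm' | hm'm
    · have hmq := ih h' hW.of_cons hmm'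
      rw [hpm.depth_eq] at hmq
      omega
    · obtain rfl := hm'm.eq hpm
      simp at hW

variable (w : Sym2 V → ℝ)

noncomputable def weightedDist (a b : V) : ℝ :=
  ((hG.path a b).edges.map w).sum

variable {hG} in
theorem weightedDist_eq_of_isPath {a b : V} {W : G.Walk a b} (hW : W.IsPath) :
    (W.edges.map w).sum = hG.weightedDist w a b := by
  rw [weightedDist, eq_path hW]

theorem weightedDist_self (a : V) : hG.weightedDist w a a = 0 := by
  simp [weightedDist, path_self]

theorem weightedDist_comm (a b : V) : hG.weightedDist w a b = hG.weightedDist w b a := by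
  rw [← weightedDist_eq_of_isPath w (hG.isPath_path b a).reverse]
  simp [weightedDist, List.sum_reverse]

variable {hG} in
theorem IsParent.weightedDist_eq {r m p : V} (h : hG.IsParent r m p) :
    hG.weightedDist w r p = hG.weightedDist w r m + w s(m, p) := by
  obtain ⟨hm, hpm⟩ := h
  simp [weightedDist, hpm]

theorem weightedDist_eq_of_adj_of_eq_zero {m p : V} (h : G.Adj m p) (hw : w s(m, p) = 0)
    (a : V) : hG.weightedDist w a p = hG.weightedDist w a m := by
  rcases hG.isParent_or_isParent_of_adj a h with h | h
  · rw [h.weightedDist_eq, hw, add_zero]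
  · rw [h.weightedDist_eq, Sym2.eq_swap, hw, add_zero]

variable {hG} in
theorem IsParent.weightedDist_eq_add {r nb p q : V} (hpar : hG.IsParent r nb p) (hq : q ≠ p)
    (hdepth : hG.depth r q ≤ hG.depth r p) :
    hG.weightedDist w p q = w s(nb, p) + hG.weightedDist w nb q := by
  obtain ⟨m, h, W, hW⟩ := Walk.not_nil_iff.1 (Walk.not_nil_of_ne (p := hG.path p q) hq.symm)
  have hpath : (Walk.cons h W).IsPath := hW ▸ hG.isPath_path p q
  rcases hG.isParent_or_isParent_of_adj r h with hpm | hmp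
  · exact absurd (hG.depth_lt_of_isPath_cons h W hpath hpm) (not_lt.2 hdepth)
  · obtain rfl := hmp.eq hpar
    rw [← weightedDist_eq_of_isPath w hpath, ← weightedDist_eq_of_isPath w hpath.of_cons]
    simp [Sym2.eq_swap]

noncomputable def expDistMatrix : Matrix V V ℝ :=
  of fun a b => Real.exp (-hG.weightedDist w a b)

noncomputable def zeroDistMatrix : Matrix V V ℝ :=
  of fun a b => if hG.weightedDist w a b = 0 then 1 else 0

theorem expDistMatrix_isSymm : (hG.expDistMatrix w).IsSymm := by
  ext a b
  simp [expDistMatrix, weightedDist_comm]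

theorem expDistMatrix_apply_self (a : V) : hG.expDistMatrix w a a = 1 := by
  simp [expDistMatrix, weightedDist_self]

variable [Fintype V]

variable {hG w} in
theorem IsParent.expDistMatrix_mulVec_apply {r nb p : V} (hpar : hG.IsParent r nb p)
    {y : V → ℝ} (hyp : y p = 0) (hy : ∀ b, y b ≠ 0 → hG.depth r b ≤ hG.depth r p) :
    (hG.expDistMatrix w *ᵥ y) p = Real.exp (-w s(nb, p)) * (hG.expDistMatrix w *ᵥ y) nb := by
  simp only [mulVec, dotProduct, mul_sum]
  refine sum_congr rfl fun b _ => ?_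
  by_cases hb : y b = 0
  · simp [hb]
  · have hbp : b ≠ p := fun h => hb (h ▸ hyp)
    simp only [expDistMatrix, of_apply, hpar.weightedDist_eq_add w hbp (hy b hb), neg_add,
      Real.exp_add]
    ring

/-- The induction invariant: `zeroDistMatrix w *ᵥ y = 0` says that `y` sums to zero over every
class of vertices at distance zero from each other. -/
def ExpFormControlled (y : V → ℝ) : Prop :=
  0 ≤ y ⬝ᵥ hG.expDistMatrix w *ᵥ y ∧
    (y ⬝ᵥ hG.expDistMatrix w *ᵥ y = 0 → hG.zeroDistMatrix w *ᵥ y = 0)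

section Single

variable [DecidableEq V]

theorem zeroDistMatrix_mulVec_single_eq_of_adj {m p : V} (h : G.Adj m p) (hw : w s(m, p) = 0)
    (c : ℝ) : hG.zeroDistMatrix w *ᵥ Pi.single p c = hG.zeroDistMatrix w *ᵥ Pi.single m c := by
  ext a
  simp [zeroDistMatrix, hG.weightedDist_eq_of_adj_of_eq_zero w h hw]

theorem expFormControlled_single (v : V) (a : ℝ) : hG.ExpFormControlled w (Pi.single v a) := by
  have hQ : Pi.single v a ⬝ᵥ hG.expDistMatrix w *ᵥ Pi.single v a = a ^ 2 := by
    simp [expDistMatrix_apply_self, sq]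
  refine ⟨hQ ▸ sq_nonneg a, fun h0 => ?_⟩
  rw [hQ] at h0
  rw [pow_eq_zero_iff two_ne_zero |>.1 h0]
  simp

variable {hG w} in
theorem IsParent.expFormControlled_add_single {r nb p : V} (hpar : hG.IsParent r nb p)
    (hw : 0 ≤ w s(nb, p)) {y : V → ℝ} (hyp : y p = 0)
    (hy : ∀ b, y b ≠ 0 → hG.depth r b ≤ hG.depth r p) (a : ℝ)
    (hz : hG.ExpFormControlled w (y + Pi.single nb (-(hG.expDistMatrix w *ᵥ y) nb))) :
    hG.ExpFormControlled w (y + Pi.single p a) := by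
  set c := (hG.expDistMatrix w *ᵥ y) nb
  set t := Real.exp (-w s(nb, p))
  have hQ := add_single_dotProduct_mulVec_add_single_eq_of_mulVec_apply
    (hG.expDistMatrix_isSymm w) (hG.expDistMatrix_apply_self w p) (hG.expDistMatrix_apply_self w nb)
    (hpar.expDistMatrix_mulVec_apply hyp hy) a
  have ht0 : 0 < t := Real.exp_pos _
  have ht1 : t ≤ 1 := Real.exp_le_one_iff.2 (neg_nonpos.2 hw)
  have hct : 0 ≤ (1 - t ^ 2) * c ^ 2 := mul_nonneg (by nlinarith) (sq_nonneg c)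
  refine ⟨by rw [hQ]; nlinarith [hz.1, sq_nonneg (a + t * c)], fun h0 => ?_⟩
  rw [hQ] at h0
  have hzQ := le_antisymm (by nlinarith [sq_nonneg (a + t * c)]) hz.1
  have ha : a + t * c = 0 := pow_eq_zero_iff two_ne_zero |>.1 (by nlinarith)
  have hc : (1 - t ^ 2) * c ^ 2 = 0 := by nlinarith
  have hdecomp : y + Pi.single p a = (y + Pi.single nb (-c)) + Pi.single nb c + Pi.single p a := by
    rw [Pi.single_neg]
    abel
  rw [hdecomp, mulVec_add, mulVec_add, hz.2 hzQ, zero_add]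
  rcases mul_eq_zero.1 hc with ht | hc2
  · have ht_one : t = 1 := by nlinarith
    have hw0 : w s(nb, p) = 0 := by simpa [t] using ht_one
    rw [hG.zeroDistMatrix_mulVec_single_eq_of_adj w hpar.1 hw0, ← mulVec_add, ← Pi.single_add,
      show c + a = 0 by rw [ht_one] at ha; linarith, Pi.single_zero, mulVec_zero]
  · have hc0 : c = 0 := pow_eq_zero_iff two_ne_zero |>.1 hc2
    have ha0 : a = 0 := by rw [hc0] at ha; linarith
    simp [hc0, ha0]

end Single

theorem expFormControlled_of_forall_ne_zero {r : V} {y : V → ℝ} (hy : ∀ b, y b ≠ 0 → b = r) :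
    hG.ExpFormControlled w y := by
  classical
  have hyr : y = Pi.single r (y r) := by
    ext b
    by_cases hb : b = r
    · simp [hb]
    · simpa [hb] using not_imp_comm.1 (hy b) hb
  rw [hyr]
  exact hG.expFormControlled_single w r _

theorem expFormControlled (hw : ∀ e, 0 ≤ w e) (y : V → ℝ) : hG.ExpFormControlled w y := by
  classical
  obtain ⟨r⟩ := hG.connected.nonempty
  induction hμ : ∑ b ∈ univ.filter (y · ≠ 0), hG.depth r b using Nat.strong_induction_on
    generalizing y with
  | _ n ih =>
  by_cases hroot : ∀ b, y b ≠ 0 → b = r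
  · exact hG.expFormControlled_of_forall_ne_zero w hroot
  push Not at hroot
  obtain ⟨b₀, hb₀, hb₀r⟩ := hroot
  obtain ⟨p, hp, hmax⟩ := exists_max_image (univ.filter (y · ≠ 0)) (hG.depth r)
    ⟨b₀, by simpa using hb₀⟩
  have hpr : p ≠ r := by
    rintro rfl
    have := hmax b₀ (by simpa using hb₀)
    rw [(hG.depth_eq_zero_iff).2 rfl, Nat.le_zero, hG.depth_eq_zero_iff] at this
    exact hb₀r this
  obtain ⟨nb, hpar⟩ := hG.exists_isParent hpr
  set y' := Function.update y p 0
  set z := y' + Pi.single nb (-(hG.expDistMatrix w *ᵥ y') nb)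
  have hy' : ∀ b, y' b ≠ 0 → hG.depth r b ≤ hG.depth r p := by
    intro b hb
    refine hmax b ?_
    by_cases hbp : b = p
    · simp [y', hbp] at hb
    · simpa [y', hbp] using hb
  have hlt : ∑ b ∈ univ.filter (z · ≠ 0), hG.depth r b < n := by
    rw [← hμ]
    refine sum_lt_sum_of_subset_erase_union_singleton hp ?_ (hpar.depth_eq ▸ lt_add_one _)
    intro b hb
    by_cases hbnb : b = nb
    · simp [hbnb]
    · by_cases hbp : b = p
      · simp [z, y', hbp, hpar.1.ne.symm] at hb
      · simpa [z, y', hbp, hbnb] using hb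
  have := hpar.expFormControlled_add_single (hw _) (by simp [y']) hy' (y p) (ih _ hlt _ rfl)
  rwa [show y' + Pi.single p (y p) = y by ext b; by_cases hb : b = p <;> simp [y', hb]] at this

theorem posDef_expDistMatrix_submatrix (hw : ∀ e, 0 ≤ w e) {ι : Type*} [Fintype ι]
    {leaf : ι → V} (hleaf : ∀ u v, u ≠ v → 0 < hG.weightedDist w (leaf u) (leaf v)) :
    ((hG.expDistMatrix w).submatrix leaf leaf).PosDef := by
  classical
  refine posDef_iff_dotProduct_mulVec.2
    ⟨(isHermitian_iff_isSymm.2 (hG.expDistMatrix_isSymm w)).submatrix leaf, fun x hx => ?_⟩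
  set y : V → ℝ := ∑ u, Pi.single (leaf u) (x u)
  have hZ : ∀ u, (hG.zeroDistMatrix w *ᵥ y) (leaf u) = x u := by
    intro u
    rw [mulVec_sum_single_apply, sum_eq_single u]
    · simp [zeroDistMatrix, weightedDist_self]
    · intro v _ hvu
      simp [zeroDistMatrix, (hleaf u v hvu.symm).ne']
    · simp
  obtain ⟨hnonneg, hzero⟩ := hG.expFormControlled w hw y
  rw [star_trivial, dotProduct_submatrix_mulVec]
  refine hnonneg.lt_of_ne fun h => hx (funext fun u => ?_)
  rw [← hZ u, hzero h.symm]
  rfl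

end SimpleGraph.IsTree

/-- If d is a tree metric on the N leaves of an edge-weighted tree (the path-length
distance, with all pairwise leaf distances strictly positive off the diagonal), then the
matrix (e^{-d(u,v)})_{u,v} is symmetric positive definite. -/
theorem tree_exp_matrix_posDef {N : ℕ} (d : Fin N → Fin N → ℝ)
    (V : Type) [Fintype V] (G : SimpleGraph V) (hG : G.IsTree)
    (w : Sym2 V → ℝ) (hw : ∀ e, 0 ≤ w e)
    (leaf : Fin N → V)
    (hd : ∀ u v : Fin N, ∀ pth : G.Walk (leaf u) (leaf v), pth.IsPath →
      d u v = (pth.edges.map w).sum)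
    (hpos : ∀ u v : Fin N, u ≠ v → 0 < d u v) :
    (Matrix.of fun u v : Fin N => Real.exp (-(d u v))).PosDef := by
  have hdist : ∀ u v, d u v = hG.weightedDist w (leaf u) (leaf v) :=
    fun u v => hd u v _ (hG.isPath_path _ _)
  have hS : (Matrix.of fun u v : Fin N => Real.exp (-(d u v)))
      = (hG.expDistMatrix w).submatrix leaf leaf := by
    ext u v
    simp [SimpleGraph.IsTree.expDistMatrix, hdist]
  rw [hS]
  exact hG.posDef_expDistMatrix_submatrix w hw fun u v huv => hdist u v ▸ hpos u v huv
end

section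
/- Let S ∈ ℝ^{N×N} be symmetric with s_{NN} = 1 and last row/column of the form s_{Nu} = s_{uN} = x^{1/2}·c_u for u < N (where x ∈ [0,1] parametrizes (1−λ)² for an edge weight λ). Then det(S) is an affine (degree ≤ 1) polynomial function of x when all other entries are held fixed. -/
/-- Determinant linearity step: if S(x) is symmetric with block structure
S(x)_{uv} = A_{uv} for u,v < N, S(x)_{uN} = S(x)_{Nu} = √x·c_u, S(x)_{NN} = 1,
then x ↦ det S(x) is an affine (degree ≤ 1) function of x on [0,1]. -/
theorem det_affine_in_x (N : ℕ) (A : Matrix (Fin N) (Fin N) ℝ) (hA : A.IsSymm)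
    (c : Fin N → ℝ) (S : ℝ → Matrix (Fin N ⊕ Unit) (Fin N ⊕ Unit) ℝ)
    (hS11 : ∀ x : ℝ, ∀ i j : Fin N, S x (Sum.inl i) (Sum.inl j) = A i j)
    (hS12 : ∀ x : ℝ, ∀ i : Fin N, S x (Sum.inl i) (Sum.inr ()) = Real.sqrt x * c i)
    (hS21 : ∀ x : ℝ, ∀ j : Fin N, S x (Sum.inr ()) (Sum.inl j) = Real.sqrt x * c j)
    (hS22 : ∀ x : ℝ, S x (Sum.inr ()) (Sum.inr ()) = 1) :
    ∃ a b : ℝ, ∀ x ∈ Set.Icc (0 : ℝ) 1, (S x).det = a + b * x := by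
  -- M t : same matrix but with the factor t on the last column only
  set M : ℝ → Matrix (Fin N ⊕ Unit) (Fin N ⊕ Unit) ℝ := fun t =>
    Matrix.fromBlocks A (Matrix.replicateCol Unit fun i => t * c i) (Matrix.replicateRow Unit c) 1 with hM
  have key : ∀ x ∈ Set.Icc (0 : ℝ) 1, (S x).det = (M x).det := by
    intro x hx
    have hSx : S x = Matrix.fromBlocks A (Matrix.replicateCol Unit fun i => Real.sqrt x * c i)
        (Matrix.replicateRow Unit fun j => Real.sqrt x * c j) 1 := by
      ext i j
      rcases i with i | i <;> rcases j with j | j <;>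
        simp [Matrix.fromBlocks, Matrix.replicateCol, Matrix.replicateRow, hS11, hS12, hS21, hS22, Matrix.one_apply]
    have h1 : Invertible (1 : Matrix Unit Unit ℝ) := invertibleOne
    have hBC : (Matrix.replicateCol Unit fun i => Real.sqrt x * c i) *
        (Matrix.replicateRow Unit fun j => Real.sqrt x * c j) =
        (Matrix.replicateCol Unit fun i => x * c i) * Matrix.replicateRow Unit c := by
      ext i j
      simp only [Matrix.mul_apply, Matrix.replicateCol_apply, Matrix.replicateRow_apply, Finset.univ_unique,
        Finset.sum_singleton]
      have hxx : Real.sqrt x * Real.sqrt x = x := Real.mul_self_sqrt hx.1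
      rw [show Real.sqrt x * c i * (Real.sqrt x * c j)
          = Real.sqrt x * Real.sqrt x * (c i * c j) by ring, hxx]
      ring
    rw [hSx, hM, Matrix.det_fromBlocks₂₂, Matrix.det_fromBlocks₂₂, invOf_one, Matrix.mul_one,
      Matrix.mul_one, hBC]
  -- affine in x via column linearity
  set v : Fin N ⊕ Unit → ℝ := Sum.elim c 0 with hv
  set w : Fin N ⊕ Unit → ℝ := Sum.elim 0 1 with hw
  have hMcol : ∀ t : ℝ, M t = (M 0).updateCol (Sum.inr ()) (t • v + w) := by
    intro t
    ext i j
    rcases j with j | j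
    · rcases i with i | i <;>
        simp [hM, Matrix.updateCol_apply, Matrix.fromBlocks, Matrix.replicateRow]
    · rcases i with i | i <;>
        simp [hM, hv, hw, Matrix.updateCol_apply, Matrix.fromBlocks, Matrix.replicateCol,
          Matrix.one_apply]
  refine ⟨((M 0).updateCol (Sum.inr ()) w).det, ((M 0).updateCol (Sum.inr ()) v).det,
    fun x hx => ?_⟩
  rw [key x hx, hMcol x, Matrix.det_updateCol_add, Matrix.det_updateCol_smul]
  ring
end
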